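/- The vector |jα;ra⟩ = (1/√(2j+1)) ∑_{m=-j}^{j} q^{(j+m)(j-m+1)a/2 - jmr + (j+m)α}|j,m⟩ is an eigenvector of v_{ra} with eigenvalue q^{j(a+r)-α}, for each α ∈ {0,...,2j}. -/
import Mathlib


open Complex Finset Matrix

/-- The unitary cyclic shift `v_{ra}` on `ℂ^d` (`d = 2j+1`, basis `|k⟩ = |j, k-j⟩`):
`v_{ra}|j,m⟩ = q^{(j-m)a}|j,m+1⟩` for `m < j` and `v_{ra}|j,j⟩ = e^{2πijr}|j,-j⟩`,
where `q^x = exp(2πix/d)` and `j = (d-1)/2`. -/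
noncomputable def vra (d : ℕ) (a r : ℝ) : Matrix (Fin d) (Fin d) ℂ := fun i l =>
  if (l : ℕ) < d - 1 ∧ (i : ℕ) = (l : ℕ) + 1 then
    Complex.exp (2 * (Real.pi : ℂ) * Complex.I * ((((d : ℝ) - 1 - (l : ℕ)) * a : ℝ) / (d : ℂ)))
  else if (l : ℕ) = d - 1 ∧ (i : ℕ) = 0 then
    Complex.exp (2 * (Real.pi : ℂ) * Complex.I * ((((d : ℝ) - 1) / 2 * r : ℝ)))
  else 0

/-- The diagonal operator `h` with `h|j,m⟩ = √((j+m)(j-m+1))|j,m⟩`, i.e.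
`h|k⟩ = √(k(d-k))|k⟩` in the shifted indexing `k = j+m = 0,…,d-1`. -/
noncomputable def hmat (d : ℕ) : Matrix (Fin d) (Fin d) ℂ :=
  Matrix.diagonal fun k => ((Real.sqrt ((k : ℕ) * ((d : ℝ) - (k : ℕ))) : ℝ) : ℂ)

/-- The phase function `ρ(j,m,x,y,z) = (j+m)(j-m+1)x/2 - jmy + (j+m)z`. -/
noncomputable def rho (j m x y z : ℝ) : ℝ :=
  (j + m) * (j - m + 1) * x / 2 - j * m * y + (j + m) * z

/-- The vector `|jα;ra⟩ = (1/√d) ∑_m q^{(j+m)(j-m+1)a/2 - jmr + (j+m)α}|j,m⟩`. -/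
noncomputable def mubVec (d : ℕ) (a r α : ℝ) : Fin d → ℂ := fun k =>
  ((1 / Real.sqrt d : ℝ) : ℂ) *
    Complex.exp (2 * (Real.pi : ℂ) * Complex.I *
      ((rho (((d : ℝ) - 1) / 2) ((k : ℝ) - ((d : ℝ) - 1) / 2) a r α : ℝ) / (d : ℂ)))

lemma exp_eq_of_shift (X Y : ℂ) (n : ℤ) (h : X = Y + n * (2 * Real.pi * I)) :
    Complex.exp X = Complex.exp Y := by
  rw [h, Complex.exp_add, Complex.exp_int_mul_two_pi_mul_I, mul_one]

set_option maxHeartbeats 1000000 in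
/-- `|jα;ra⟩` is an eigenvector of `v_{ra}` with eigenvalue
`q^{j(a+r)-α}`, for each `α ∈ {0,…,2j}`. -/
theorem stmt_15 (d : ℕ) (hd : 2 ≤ d) (a : ℕ) (ha : a < d) (r : ℝ) (α : ℕ) (hα : α < d) :
    (vra d a r).mulVec (mubVec d a r α) =
      Complex.exp (2 * (Real.pi : ℂ) * Complex.I *
          (((((d : ℝ) - 1) / 2 * ((a : ℝ) + r) - α) : ℝ) / (d : ℂ))) •
        mubVec d a r α := by
  have hdC : (d : ℂ) ≠ 0 := by
    exact_mod_cast Nat.cast_ne_zero.mpr (by omega : d ≠ 0)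
  funext i
  simp only [Matrix.mulVec, dotProduct, Pi.smul_apply, smul_eq_mul]
  rcases Nat.eq_zero_or_pos (i : ℕ) with h0 | hpos
  · rw [Finset.sum_eq_single_of_mem (⟨d - 1, by omega⟩ : Fin d) (Finset.mem_univ _)]
    · simp only [vra, mubVec]
      have hc1 : ¬(((⟨d - 1, by omega⟩ : Fin d) : ℕ) < d - 1 ∧ (i : ℕ) = ((⟨d - 1, by omega⟩ : Fin d) : ℕ) + 1) := by
        simp only [Fin.val_mk]; omega
      rw [if_neg hc1, if_pos (⟨trivial, h0⟩ : True ∧ (i : ℕ) = 0)]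
      rw [mul_comm (((1 / Real.sqrt d : ℝ) : ℂ)) _, mul_comm (((1 / Real.sqrt d : ℝ) : ℂ)) _,
        ← mul_assoc, ← mul_assoc, ← Complex.exp_add, ← Complex.exp_add]
      congr 1
      apply exp_eq_of_shift _ _ (α : ℤ)
      have hcast : ((d - 1 : ℕ) : ℝ) = (d : ℝ) - 1 := by
        push_cast [Nat.cast_sub (by omega : 1 ≤ d)]; ring
      have hi0 : ((i : ℕ) : ℝ) = 0 := by rw [h0]; norm_num
      simp only [rho, hcast, hi0]
      push_cast
      field_simp
      ring
    · intro l _ hl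
      have hlv : (l : ℕ) ≠ d - 1 := fun h => hl (Fin.ext (by simpa using h))
      have hc1 : ¬((l : ℕ) < d - 1 ∧ (i : ℕ) = (l : ℕ) + 1) := by omega
      have hc2 : ¬((l : ℕ) = d - 1 ∧ (i : ℕ) = 0) := by omega
      simp only [vra, if_neg hc1, if_neg hc2, zero_mul]
  · rw [Finset.sum_eq_single_of_mem (⟨(i : ℕ) - 1, by omega⟩ : Fin d) (Finset.mem_univ _)]
    · simp only [vra, mubVec]
      have hc1 : ((⟨(i : ℕ) - 1, by omega⟩ : Fin d) : ℕ) < d - 1 ∧ (i : ℕ) = ((⟨(i : ℕ) - 1, by omega⟩ : Fin d) : ℕ) + 1 := by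
        simp only [Fin.val_mk]; omega
      rw [if_pos hc1]
      rw [mul_comm (((1 / Real.sqrt d : ℝ) : ℂ)) _, mul_comm (((1 / Real.sqrt d : ℝ) : ℂ)) _,
        ← mul_assoc, ← mul_assoc, ← Complex.exp_add, ← Complex.exp_add]
      congr 1
      apply exp_eq_of_shift _ _ 0
      have hcast : (((i : ℕ) - 1 : ℕ) : ℝ) = ((i : ℕ) : ℝ) - 1 := by
        push_cast [Nat.cast_sub (by omega : 1 ≤ (i : ℕ))]; ring
      simp only [rho, hcast]
      push_cast
      field_simp
      ring
    · intro l _ hl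
      have hlv : (l : ℕ) ≠ (i : ℕ) - 1 := fun h => hl (Fin.ext (by simpa using h))
      have hc1 : ¬((l : ℕ) < d - 1 ∧ (i : ℕ) = (l : ℕ) + 1) := by omega
      have hc2 : ¬((l : ℕ) = d - 1 ∧ (i : ℕ) = 0) := by omega
      simp only [vra, if_neg hc1, if_neg hc2, zero_mul]
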